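/- arXiv:1411.5905 — 4 statements merged into one kernel-verified Lean document; each statement's English description precedes it below -/
import Mathlib

section
/- Let (X,⊳) be a shelf, R a commutative ring, and C_n(X) the free R-module on X^{n+1}. Define ∂^⊳ : C_n(X) → C_{n-1}(X) by ∂^⊳ = Σ_{i=0}^{n} (-1)^{n-i} d_i^⊳, where d_i^⊳(x_n,…,x_0) = (x_n⊳x_i,…,x_{i+1}⊳x_i, x_{i-1},…,x_0). Then ∂^⊳ ∘ ∂^⊳ = 0, so (C(X), ∂^⊳) is a chain complex. -/
/-!
Right self-distributivity is what makes the face maps satisfy the semi-simplicial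
identities `d_i ∘ d_{j+1} = d_j ∘ d_i` for `i ≤ j`. Since `(-1)^(n-i) = (-1)^n (-1)^i`, the
differential `∂^⊳` is `±` the usual alternating sum of faces, and in the square of such a sum
the terms indexed by `(i, j+1)` and `(j, i)` cancel in pairs.
-/

/-- The `i`-th face map for a binary operation `op` on `X` (entries counted from the right). -/
def face {X : Type*} (op : X → X → X) {n : ℕ} (i : Fin (n+1)) (f : Fin (n+1) → X) :
    Fin n → X :=
  fun k => if (k : ℕ) < (i : ℕ) then f k.castSucc else op (f k.succ) (f i)

/-- The one-term distributive differential `∂^⊳ = Σ_{i=0}^{n} (-1)^{n-i} d_i^⊳`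
on the free `R`-module `C_n(X) = R⟨X^{n+1}⟩`. -/
noncomputable def oneTermDiff {X : Type*} (R : Type*) [CommRing R] (op : X → X → X) (n : ℕ) :
    ((Fin (n+1) → X) →₀ R) →ₗ[R] ((Fin n → X) →₀ R) :=
  ∑ i : Fin (n+1), ((-1 : R) ^ (n - (i : ℕ))) • Finsupp.lmapDomain R R (face op i)

theorem Fin.sum_sum_neg_one_pow_smul_eq_zero {R M : Type*} [Ring R] [AddCommGroup M]
    [Module R M] {n : ℕ} (g : Fin (n + 1) → Fin (n + 2) → M)
    (hg : ∀ i j : Fin (n + 1), i ≤ j → g i j.succ = g j i.castSucc) :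
    ∑ i : Fin (n + 1), ∑ j : Fin (n + 2), (-1 : R) ^ ((i : ℕ) + j) • g i j = 0 := by
  rw [← Finset.sum_product', Finset.univ_product_univ]
  let S : Finset (Fin (n + 1) × Fin (n + 2)) := {p | (p.2 : ℕ) ≤ p.1}
  have mem_S {p} : p ∈ S ↔ (p.2 : ℕ) ≤ p.1 := Finset.mem_filter_univ p
  have mem_Sc {p} : p ∈ Sᶜ ↔ (p.1 : ℕ) < p.2 := by rw [Finset.mem_compl, mem_S, not_le]
  rw [← Finset.sum_add_sum_compl S, add_eq_zero_iff_eq_neg, ← Finset.sum_neg_distrib]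
  refine Finset.sum_bij' (fun p _ => (p.2.castLT (by grind), p.1.succ))
    (fun p _ => (p.2.pred (by grind [Fin.ext_iff]), p.1.castSucc)) ?_ ?_ ?_ ?_ ?_
  · grind
  · grind
  · simp
  · simp
  · rintro ⟨i, j⟩ hij
    rw [hg _ _ (by grind [Fin.le_iff_val_le_val])]
    simp only [Fin.castSucc_castLT, Fin.val_castLT, Fin.val_succ]
    rw [← neg_smul, ← add_assoc, add_comm (j : ℕ), pow_succ, mul_neg_one, neg_neg]

theorem face_comp_face {X : Type*} {op : X → X → X}
    (hop : ∀ x y z : X, op (op x y) z = op (op x z) (op y z)) {n : ℕ} {i j : Fin (n + 1)}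
    (hij : i ≤ j) : face op i ∘ face op j.succ = face op j ∘ face op i.castSucc := by
  funext f k
  simp only [Function.comp_apply, face, Fin.val_castSucc, Fin.val_succ]
  rw [Fin.le_iff_val_le_val] at hij
  split_ifs <;> first | omega | rfl | exact hop ..

noncomputable def altFaceSum {X : Type*} (R : Type*) [CommRing R] (op : X → X → X) (n : ℕ) :
    ((Fin (n + 1) → X) →₀ R) →ₗ[R] ((Fin n → X) →₀ R) :=
  ∑ i : Fin (n + 1), (-1 : R) ^ (i : ℕ) • Finsupp.lmapDomain R R (face op i)

theorem oneTermDiff_eq_neg_one_pow_smul_altFaceSum {X : Type*} (R : Type*) [CommRing R]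
    (op : X → X → X) (n : ℕ) : oneTermDiff R op n = (-1 : R) ^ n • altFaceSum R op n := by
  rw [oneTermDiff, altFaceSum, Finset.smul_sum]
  refine Finset.sum_congr rfl fun i _ => ?_
  rw [smul_smul, ← pow_sub_mul_pow (-1 : R) (Nat.lt_succ_iff.mp i.isLt), mul_assoc, ← pow_add,
    ← two_mul, pow_mul, neg_one_sq, one_pow, mul_one]

theorem altFaceSum_comp_altFaceSum {X : Type*} (R : Type*) [CommRing R] {op : X → X → X}
    (hop : ∀ x y z : X, op (op x y) z = op (op x z) (op y z)) (n : ℕ) :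
    altFaceSum R op n ∘ₗ altFaceSum R op (n + 1) = 0 := by
  refine LinearMap.ext fun x => ?_
  simp only [altFaceSum, LinearMap.comp_apply, LinearMap.coe_sum, Finset.sum_apply,
    LinearMap.smul_apply, map_sum, map_smul, Finsupp.lmapDomain_apply, ← Finsupp.mapDomain_comp,
    Finset.smul_sum, smul_smul, ← pow_add, LinearMap.zero_apply]
  rw [Finset.sum_comm]
  simp_rw [add_comm]
  exact Fin.sum_sum_neg_one_pow_smul_eq_zero
    (fun i j => Finsupp.mapDomain (face op i ∘ face op j) x)
    fun i j hij => by rw [face_comp_face hop hij]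

/-- For a shelf `(X, ⊳)`, the one-term distributive differential squares to zero, so
`(C(X), ∂^⊳)` is a chain complex. -/
theorem oneTermDiff_squares_to_zero {X : Type*} (R : Type*) [CommRing R] (op : X → X → X)
    (hshelf : ∀ x y z : X, op (op x y) z = op (op x z) (op y z)) (n : ℕ) :
    (oneTermDiff R op n).comp (oneTermDiff R op (n+1)) = 0 := by
  rw [oneTermDiff_eq_neg_one_pow_smul_altFaceSum, oneTermDiff_eq_neg_one_pow_smul_altFaceSum,
    LinearMap.smul_comp, LinearMap.comp_smul, altFaceSum_comp_altFaceSum R hshelf, smul_zero,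
    smul_zero]
end

section
/- Let X be a set with two binary operations ⊳₁ and ⊳₂ that are mutually right-distributive: (x⊳_i y)⊳_j z = (x⊳_j z)⊳_i(y⊳_j z) for all x,y,z and i,j ∈ {1,2} (in particular each is a shelf operation). Then the induced one-term differentials on the free R-module chain groups anticommute: ∂^{⊳₁}∂^{⊳₂} + ∂^{⊳₂}∂^{⊳₁} = 0. Consequently, for any a,b ∈ R the linear combination a·∂^{⊳₁} + b·∂^{⊳₂} squares to zero. -/
section Faces

variable {X : Type*} {n : ℕ}

theorem face_apply_of_lt (op : X → X → X) {i : Fin (n+1)} (f : Fin (n+1) → X) {k : Fin n}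
    (h : (k : ℕ) < i) : face op i f k = f k.castSucc :=
  if_pos h

theorem face_apply_of_le (op : X → X → X) {i : Fin (n+1)} (f : Fin (n+1) → X) {k : Fin n}
    (h : (i : ℕ) ≤ k) : face op i f k = op (f k.succ) (f i) :=
  if_neg (Nat.not_lt.2 h)

theorem face_comp_face_succ {A B : X → X → X} (hd : ∀ x y z, A (B x y) z = B (A x z) (A y z))
    {i j : Fin (n+1)} (hij : i ≤ j) :
    face A i ∘ face B j.succ = face B j ∘ face A i.castSucc := by
  funext f k
  obtain hki | hik := lt_or_ge (k : ℕ) i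
  · simp (disch := grind) only [Function.comp_apply, face_apply_of_lt]
  obtain hkj | hjk := lt_or_ge (k : ℕ) j
  · simp (disch := grind) only [Function.comp_apply, face_apply_of_lt, face_apply_of_le,
      Fin.succ_castSucc]
  · simp (disch := grind) only [Function.comp_apply, face_apply_of_lt, face_apply_of_le, hd]

end Faces

section Differentials

variable {X : Type*} (R : Type*) [CommRing R]

noncomputable def signedFaceComp (o o' : X → X → X) (n : ℕ) (p : Fin (n+1) × Fin (n+2)) :
    ((Fin (n+2) → X) →₀ R) →ₗ[R] ((Fin n → X) →₀ R) :=
  (-1 : R) ^ ((n - p.1) + (n + 1 - p.2)) • Finsupp.lmapDomain R R (face o p.1 ∘ face o' p.2)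

noncomputable def upperFaceCompSum (o o' : X → X → X) (n : ℕ) :
    ((Fin (n+2) → X) →₀ R) →ₗ[R] ((Fin n → X) →₀ R) :=
  ∑ p with p.1.castSucc < p.2, signedFaceComp R o o' n p

noncomputable def lowerFaceCompSum (o o' : X → X → X) (n : ℕ) :
    ((Fin (n+2) → X) →₀ R) →ₗ[R] ((Fin n → X) →₀ R) :=
  ∑ p with ¬ p.1.castSucc < p.2, signedFaceComp R o o' n p

theorem oneTermDiff_comp_oneTermDiff (o o' : X → X → X) (n : ℕ) :
    (oneTermDiff R o n).comp (oneTermDiff R o' (n+1))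
      = upperFaceCompSum R o o' n + lowerFaceCompSum R o o' n := by
  rw [upperFaceCompSum, lowerFaceCompSum, Finset.sum_filter_add_sum_filter_not]
  ext f : 2
  simp [oneTermDiff, signedFaceComp, Fintype.sum_prod_type, Finset.smul_sum, pow_add, mul_comm]

theorem signedFaceComp_succ_eq_neg {o o' : X → X → X}
    (hd : ∀ x y z, o (o' x y) z = o' (o x z) (o y z)) {n : ℕ} {i j : Fin (n+1)} (hij : i ≤ j) :
    signedFaceComp R o o' n (i, j.succ) = -signedFaceComp R o' o n (j, i.castSucc) := by
  have hsign : (-1 : R) ^ (n - i + (n + 1 - j.succ))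
      = -(-1) ^ (n - j + (n + 1 - i.castSucc)) := by
    rw [Fin.val_succ, Fin.val_castSucc,
      show n - j + (n + 1 - i) = n - i + (n + 1 - (j + 1)) + 1 by grind,
      pow_succ, mul_neg_one, neg_neg]
  rw [signedFaceComp, signedFaceComp, face_comp_face_succ hd hij, hsign]
  -- unification cannot find the `AddCommGroup` instance on these linear maps by itself
  exact neg_smul (M := ((Fin (n+2) → X) →₀ R) →ₗ[R] ((Fin n → X) →₀ R)) _ _

theorem upperFaceCompSum_eq_neg_lowerFaceCompSum {o o' : X → X → X}
    (hd : ∀ x y z, o (o' x y) z = o' (o x z) (o y z)) (n : ℕ) :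
    upperFaceCompSum R o o' n = -lowerFaceCompSum R o' o n := by
  rw [upperFaceCompSum, lowerFaceCompSum]
  refine .trans ?_
    (Finset.sum_neg_distrib (G := ((Fin (n+2) → X) →₀ R) →ₗ[R] ((Fin n → X) →₀ R)) _)
  refine Finset.sum_bij' (fun p hp => (p.2.pred ?_, p.1.castSucc))
    (fun q hq => (q.2.castPred ?_, q.1.succ)) (fun p hp => ?_) (fun q hq => ?_)
    (fun _ _ => by simp) (fun _ _ => by simp) (fun p hp => ?cancel)
  case cancel =>
    have hle : p.1 ≤ p.2.pred (by grind) := by grind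
    have h := signedFaceComp_succ_eq_neg R hd hle
    rw [Fin.succ_pred] at h
    exact h
  all_goals grind [Fin.coe_castPred]

theorem oneTermDiff_comp_oneTermDiff_self {o : X → X → X}
    (hd : ∀ x y z, o (o x y) z = o (o x z) (o y z)) (n : ℕ) :
    (oneTermDiff R o n).comp (oneTermDiff R o (n+1)) = 0 := by
  rw [oneTermDiff_comp_oneTermDiff, upperFaceCompSum_eq_neg_lowerFaceCompSum R hd]
  abel

theorem oneTermDiff_comp_add_comp_swap {o o' : X → X → X}
    (hd : ∀ x y z, o (o' x y) z = o' (o x z) (o y z))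
    (hd' : ∀ x y z, o' (o x y) z = o (o' x z) (o' y z)) (n : ℕ) :
    (oneTermDiff R o n).comp (oneTermDiff R o' (n+1))
      + (oneTermDiff R o' n).comp (oneTermDiff R o (n+1)) = 0 := by
  rw [oneTermDiff_comp_oneTermDiff, oneTermDiff_comp_oneTermDiff,
    upperFaceCompSum_eq_neg_lowerFaceCompSum R hd, upperFaceCompSum_eq_neg_lowerFaceCompSum R hd']
  abel

end Differentials

theorem LinearMap.smul_add_smul_comp_smul_add_smul_eq_zero {R M N P : Type*} [CommSemiring R]
    [AddCommMonoid M] [AddCommMonoid N] [AddCommMonoid P] [Module R M] [Module R N] [Module R P]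
    {f₁ f₂ : N →ₗ[R] P} {g₁ g₂ : M →ₗ[R] N} (h₁ : f₁ ∘ₗ g₁ = 0) (h₂ : f₂ ∘ₗ g₂ = 0)
    (h₁₂ : f₁ ∘ₗ g₂ + f₂ ∘ₗ g₁ = 0) (a b : R) :
    (a • f₁ + b • f₂) ∘ₗ (a • g₁ + b • g₂) = 0 := by
  simp only [add_comp, comp_add, smul_comp, comp_smul, h₁, h₂, smul_zero, zero_add, add_zero,
    smul_smul, mul_comm b a, ← smul_add]
  rw [add_comm, h₁₂, smul_zero]

/-- If `⊳₁` and `⊳₂` are mutually right-distributive operations on `X` (in particular each is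
a shelf operation), then the induced one-term differentials anticommute,
`∂^{⊳₁}∂^{⊳₂} + ∂^{⊳₂}∂^{⊳₁} = 0`, and consequently every linear combination
`a·∂^{⊳₁} + b·∂^{⊳₂}` squares to zero. -/
theorem oneTermDiffs_anticommute {X : Type*} (R : Type*) [CommRing R] (op₁ op₂ : X → X → X)
    (hmd : ∀ o ∈ ({op₁, op₂} : Set (X → X → X)), ∀ o' ∈ ({op₁, op₂} : Set (X → X → X)),
      ∀ x y z : X, o' (o x y) z = o (o' x z) (o' y z)) :
    (∀ n : ℕ,
      (oneTermDiff R op₁ n).comp (oneTermDiff R op₂ (n+1))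
        + (oneTermDiff R op₂ n).comp (oneTermDiff R op₁ (n+1)) = 0)
    ∧ ∀ (a b : R) (n : ℕ),
        (a • oneTermDiff R op₁ n + b • oneTermDiff R op₂ n).comp
          (a • oneTermDiff R op₁ (n+1) + b • oneTermDiff R op₂ (n+1)) = 0 := by
  have m₁ : op₁ ∈ ({op₁, op₂} : Set (X → X → X)) := .inl rfl
  have m₂ : op₂ ∈ ({op₁, op₂} : Set (X → X → X)) := .inr rfl
  have anti (n : ℕ) := oneTermDiff_comp_add_comp_swap R (hmd _ m₂ _ m₁) (hmd _ m₁ _ m₂) n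
  refine ⟨anti, fun a b n => ?_⟩
  exact LinearMap.smul_add_smul_comp_smul_add_smul_eq_zero
    (oneTermDiff_comp_oneTermDiff_self R (hmd _ m₁ _ m₁) n)
    (oneTermDiff_comp_oneTermDiff_self R (hmd _ m₂ _ m₂) n) (anti n) a b
end

section
/- Let a multispindle X act on an R-module M, and let CD_n(M;X) ⊂ C_n(M;X) = M ⊗ R⟨X^{n+1}⟩ be the submodule generated by elements m⊗(x_n,…,x_0) with x_i = x_{i+1} for some i. Then CD(M;X) is a subcomplex of C(M;X) with respect to any multiterm distributive differential ∂ = Σ_k a_k ∂^{⊳_k}. -/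
/-- The `i`-th face map on `C_n(M;X) ≅ (X^{n+1} →₀ M)`:
`d_i(m ⊗ 𝐱) = (m ⊳ x_i) ⊗ d_i(𝐱)`, where `β x : M →ₗ[R] M` is the action of `x`. -/
noncomputable def moduleFace {X : Type} (R : Type) [CommRing R] {M : Type}
    [AddCommGroup M] [Module R M] (op : X → X → X) (β : X → M →ₗ[R] M)
    {n : ℕ} (i : Fin (n+1)) :
    ((Fin (n+1) → X) →₀ M) →ₗ[R] ((Fin n → X) →₀ M) :=
  Finsupp.lsum R fun f => (Finsupp.lsingle (face op i f)).comp (β (f i))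

/-- The multiterm distributive differential with coefficients in `M`, with operations
`ops k`, actions `act k` and weights `a k`, on `C_m(M;X)`. -/
noncomputable def moduleDiff {X : Type} (R : Type) [CommRing R] {M : Type}
    [AddCommGroup M] [Module R M] {r : ℕ} (ops : Fin r → X → X → X)
    (act : Fin r → X → M →ₗ[R] M) (a : Fin r → R) (m : ℕ) :
    ((Fin (m+1) → X) →₀ M) →ₗ[R] ((Fin m → X) →₀ M) :=
  ∑ k, a k • ∑ i : Fin (m+1),
    ((-1 : R) ^ (m - (i : ℕ))) • moduleFace R (ops k) (act k) i

/-- The degenerate submodule `CD_n(M;X)`, generated by `m ⊗ (x_n,…,x_0)` with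
`x_i = x_{i+1}` for some `i`. -/
noncomputable def degenSub (X R : Type) [CommRing R] (M : Type) [AddCommGroup M] [Module R M]
    (n : ℕ) : Submodule R ((Fin (n+1) → X) →₀ M) :=
  Submodule.span R {g | ∃ (f : Fin (n+1) → X) (m : M),
    g = Finsupp.single f m ∧ ∃ i : Fin n, f i.castSucc = f i.succ}

/-
If `x_j = x_{j+1}`, then every face `d_i` with
`i ∉ {j, j+1}` again has two equal neighbouring entries: below `i` the tuple is untouched, above
`i` both entries are replaced by `x_j ⊳ x_i = x_{j+1} ⊳ x_i`. The two remaining faces agree, since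
idempotence turns `x_{j+1} ⊳ x_j` into `x_j`, and they enter the alternating sum with opposite
signs, so they cancel.
-/

section Face

variable {X : Type*} (op : X → X → X)

theorem face_castSucc_eq_face_succ (hidem : ∀ x, op x x = x) {n : ℕ} (f : Fin (n+2) → X)
    (j : Fin (n+1)) (hj : f j.castSucc = f j.succ) :
    face op j.castSucc f = face op j.succ f := by
  funext k
  simp only [face, Fin.val_castSucc, Fin.val_succ]
  rcases lt_trichotomy (k : ℕ) j with hk | hk | hk
  · rw [if_pos hk, if_pos (by omega)]
  · have hk_succ : k.succ = j.succ := by ext; simp [hk]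
    have hk_castSucc : k.castSucc = j.castSucc := by ext; simp [hk]
    rw [if_neg (by omega), if_pos (by omega), hk_succ, hk_castSucc, ← hj, hidem]
  · rw [if_neg (by omega), if_neg (by omega), hj]

theorem exists_face_castSucc_eq_face_succ {n : ℕ} (f : Fin (n+2) → X) (j : Fin (n+1))
    (hj : f j.castSucc = f j.succ) (i : Fin (n+2)) (hi_castSucc : i ≠ j.castSucc)
    (hi_succ : i ≠ j.succ) :
    ∃ t : Fin n, face op i f t.castSucc = face op i f t.succ := by
  have hij : (i : ℕ) ≠ j := fun h => hi_castSucc (Fin.ext h)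
  have hij' : (i : ℕ) ≠ j + 1 := fun h => hi_succ (Fin.ext h)
  simp only [face, Fin.val_castSucc, Fin.val_succ]
  by_cases hlt : (i : ℕ) < j
  · refine ⟨⟨(j : ℕ) - 1, by omega⟩, ?_⟩
    have h_castSucc : (⟨(j : ℕ) - 1, by omega⟩ : Fin n).castSucc.succ = j.castSucc := by
      ext; simp; omega
    have h_succ : (⟨(j : ℕ) - 1, by omega⟩ : Fin n).succ.succ = j.succ := by
      ext; simp; omega
    rw [if_neg (by simp; omega), if_neg (by simp; omega), h_castSucc, h_succ, hj]
  · refine ⟨⟨j, by omega⟩, ?_⟩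
    rw [if_pos (by simp; omega), if_pos (by simp; omega)]
    exact hj

end Face

section Complex

variable {X : Type} (R : Type) [CommRing R] {M : Type} [AddCommGroup M] [Module R M]

noncomputable def alternatingFace (op : X → X → X) (β : X → M →ₗ[R] M) (m : ℕ) :
    ((Fin (m+1) → X) →₀ M) →ₗ[R] ((Fin m → X) →₀ M) :=
  ∑ i : Fin (m+1), ((-1 : R) ^ (m - (i : ℕ))) • moduleFace R op β i

theorem moduleDiff_eq_sum_alternatingFace {r : ℕ} (ops : Fin r → X → X → X)
    (act : Fin r → X → M →ₗ[R] M) (a : Fin r → R) (m : ℕ) :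
    moduleDiff R ops act a m = ∑ k, a k • alternatingFace R (ops k) (act k) m :=
  rfl

theorem moduleFace_single (op : X → X → X) (β : X → M →ₗ[R] M) {n : ℕ} (i : Fin (n+1))
    (f : Fin (n+1) → X) (m : M) :
    moduleFace R op β i (Finsupp.single f m) = Finsupp.single (face op i f) (β (f i) m) := by
  simp [moduleFace]

theorem single_mem_degenSub {n : ℕ} (f : Fin (n+1) → X) (m : M)
    (hf : ∃ i : Fin n, f i.castSucc = f i.succ) :
    Finsupp.single f m ∈ degenSub X R M n :=
  Submodule.subset_span ⟨f, m, rfl, hf⟩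

theorem alternatingFace_single_mem_degenSub (op : X → X → X) (hidem : ∀ x, op x x = x)
    (β : X → M →ₗ[R] M) {n : ℕ} (f : Fin (n+2) → X) (m : M) (j : Fin (n+1))
    (hj : f j.castSucc = f j.succ) :
    alternatingFace R op β (n+1) (Finsupp.single f m) ∈ degenSub X R M n := by
  set T : Fin (n+2) → ((Fin (n+1) → X) →₀ M) := fun i =>
    ((-1 : R) ^ (n + 1 - (i : ℕ))) • Finsupp.single (face op i f) (β (f i) m) with hT
  have hsum : alternatingFace R op β (n+1) (Finsupp.single f m) = ∑ i, T i := by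
    simp [alternatingFace, moduleFace_single, hT]
  have hsucc_mem : j.succ ∈ Finset.univ.erase j.castSucc :=
    Finset.mem_erase.mpr ⟨Fin.castSucc_lt_succ.ne', Finset.mem_univ _⟩
  have hcancel : T j.castSucc + T j.succ = 0 := by
    have hsign : n + 1 - ((j.castSucc : Fin (n+2)) : ℕ) = (n - j) + 1 := by
      simp only [Fin.val_castSucc]; omega
    simp only [hT, face_castSucc_eq_face_succ op hidem f j hj, hsign, hj, Fin.val_succ,
      Nat.add_sub_add_right, pow_succ, mul_neg_one, neg_smul, neg_add_cancel]
  rw [hsum, ← Finset.add_sum_erase _ T (Finset.mem_univ _),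
    ← Finset.add_sum_erase _ T hsucc_mem, ← add_assoc, hcancel, zero_add]
  refine Submodule.sum_mem _ fun i hi => ?_
  obtain ⟨hi_succ, hi_castSucc, -⟩ := by simpa only [Finset.mem_erase] using hi
  exact Submodule.smul_mem _ _ <| single_mem_degenSub R _ _ <|
    exists_face_castSucc_eq_face_succ op f j hj i hi_castSucc hi_succ

theorem degenSub_le_comap_alternatingFace (op : X → X → X) (hidem : ∀ x, op x x = x)
    (β : X → M →ₗ[R] M) (n : ℕ) :
    degenSub X R M (n+1) ≤ (degenSub X R M n).comap (alternatingFace R op β (n+1)) := by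
  refine Submodule.span_le.mpr ?_
  rintro _ ⟨f, m, rfl, j, hj⟩
  exact alternatingFace_single_mem_degenSub R op hidem β f m j hj

end Complex

theorem degenerate_subcomplex_general
    {X : Type} (R : Type) [CommRing R] (M : Type) [AddCommGroup M] [Module R M]
    {r : ℕ} (ops : Fin r → X → X → X)
    (hidem : ∀ (k : Fin r) (x : X), ops k x x = x)
    (act : Fin r → X → (M →ₗ[R] M))
    (a : Fin r → R) :
    ∀ n : ℕ, Submodule.map (moduleDiff R ops act a (n+1)) (degenSub X R M (n+1))
      ≤ degenSub X R M n := by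
  intro n
  rw [Submodule.map_le_iff_le_comap]
  intro g hg
  rw [Submodule.mem_comap, moduleDiff_eq_sum_alternatingFace, LinearMap.sum_apply]
  exact Submodule.sum_mem _ fun k _ => Submodule.smul_mem _ _ <|
    degenSub_le_comap_alternatingFace R (ops k) (hidem k) (act k) n hg

/-- For a multispindle `X` acting on `M`, the degenerate part `CD(M;X)` is a subcomplex of
`C(M;X)` with respect to any multiterm distributive differential `∂ = Σ_k a_k ∂^{⊳_k}`. -/
theorem degenerate_subcomplex
    {X : Type} (R : Type) [CommRing R] (M : Type) [AddCommGroup M] [Module R M]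
    {r : ℕ} (ops : Fin r → X → X → X)
    (hidem : ∀ (k : Fin r) (x : X), ops k x x = x)
    (hdistr : ∀ (i j : Fin r) (x y z : X),
      ops j (ops i x y) z = ops i (ops j x z) (ops j y z))
    (act : Fin r → X → (M →ₗ[R] M))
    (hact : ∀ (i j : Fin r) (x y : X) (m : M),
      act j y (act i x m) = act i (ops j x y) (act j y m))
    (a : Fin r → R) :
    ∀ n : ℕ, Submodule.map (moduleDiff R ops act a (n+1)) (degenSub X R M (n+1))
      ≤ degenSub X R M n :=
  degenerate_subcomplex_general R M ops hidem act a
end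

section
/- Suppose f : E → Ē is a morphism of first-quadrant homological spectral sequences (f^{r+1} is the map induced by f^r on homology of (E^r, d^r), with d^r of bidegree (−r, r−1)). If f^2_{pq} : E^2_{pq} → Ē^2_{pq} is an isomorphism for all q ≤ N, then f^∞_{pq} : E^∞_{pq} → Ē^∞_{pq} is an isomorphism for all (p,q) with p + q = N. -/
/-- `Hml f g` is the homology `ker g / im f` of a composable pair `A → B → C`. -/
abbrev Hml (R : Type) [CommRing R] {A B C : Type}
    [AddCommGroup A] [AddCommGroup B] [AddCommGroup C]
    [Module R A] [Module R B] [Module R C]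
    (f : A →ₗ[R] B) (g : B →ₗ[R] C) : Type :=
  ↥(LinearMap.ker g) ⧸
    Submodule.comap (LinearMap.ker g).subtype (LinearMap.range f)

/-- The map induced on homology by a map `φB` of middle terms compatible with the
differentials. -/
noncomputable def HmlMap (R : Type) [CommRing R] {A B C A' B' C' : Type}
    [AddCommGroup A] [AddCommGroup B] [AddCommGroup C]
    [AddCommGroup A'] [AddCommGroup B'] [AddCommGroup C']
    [Module R A] [Module R B] [Module R C]
    [Module R A'] [Module R B'] [Module R C']
    {f : A →ₗ[R] B} {g : B →ₗ[R] C} {f' : A' →ₗ[R] B'} {g' : B' →ₗ[R] C'}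
    (φB : B →ₗ[R] B')
    (hker : ∀ x : B, g x = 0 → g' (φB x) = 0)
    (hrange : ∀ x : B, (∃ y, f y = x) → ∃ y', f' y' = φB x) :
    Hml R f g →ₗ[R] Hml R f' g' :=
  Submodule.mapQ _ _
    (φB.restrict (p := LinearMap.ker g) (q := LinearMap.ker g')
      (fun x hx => LinearMap.mem_ker.mpr (hker x (LinearMap.mem_ker.mp hx))))
    (by
      rintro ⟨x, hxk⟩ hx
      rcases hrange x hx with ⟨y', hy'⟩
      exact ⟨y', hy'⟩)

/-- A first-quadrant homological spectral sequence of `R`-modules.  The differential on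
page `r` has bidegree `(−r, r−1)`, the `(r+1)`-st page is the homology of the `r`-th one,
and the pages stabilize at each spot `(p,q)`, defining the limit terms `E∞_{pq}`. -/
structure SpecSeq (R : Type) [CommRing R] where
  E : ℕ → ℤ → ℤ → ModuleCat R
  d : ∀ (r : ℕ) (p q p' q' : ℤ), p' = p - r → q' = q + r - 1 → (E r p q →ₗ[R] E r p' q')
  firstQuad : ∀ (r : ℕ) (p q : ℤ), p < 0 ∨ q < 0 → Subsingleton (E r p q)
  dd : ∀ (r : ℕ) (p q p' q' p'' q'' : ℤ) (h1 : p' = p - r) (h2 : q' = q + r - 1)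
    (h3 : p'' = p' - r) (h4 : q'' = q' + r - 1),
    (d r p' q' p'' q'' h3 h4).comp (d r p q p' q' h1 h2) = 0
  page : ∀ (r : ℕ) (p q : ℤ),
    E (r+1) p q ≃ₗ[R]
      Hml R (d r (p + r) (q - r + 1) p q (by ring) (by ring))
            (d r p q (p - r) (q + r - 1) rfl rfl)
  Einf : ℤ → ℤ → ModuleCat R
  stab : ∀ (r : ℕ) (p q : ℤ), p + q + 1 < (r : ℤ) → (E r p q ≃ₗ[R] Einf p q)

/-- A morphism of spectral sequences: maps of pages commuting with the differentials such
that `f^{r+1}` is the map induced by `f^r` on homology, together with the induced map on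
the limit terms. -/
structure SpecSeqHom (R : Type) [CommRing R] (A B : SpecSeq R) where
  f : ∀ (r : ℕ) (p q : ℤ), A.E r p q →ₗ[R] B.E r p q
  comm : ∀ (r : ℕ) (p q p' q' : ℤ) (h1 : p' = p - r) (h2 : q' = q + r - 1),
    (B.d r p q p' q' h1 h2).comp (f r p q) = (f r p' q').comp (A.d r p q p' q' h1 h2)
  compat : ∀ (r : ℕ) (p q : ℤ) (x : A.E (r+1) p q),
    B.page r p q (f (r+1) p q x)
      = HmlMap R (f := A.d r (p + r) (q - r + 1) p q (by ring) (by ring))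
          (g := A.d r p q (p - r) (q + r - 1) rfl rfl)
          (f' := B.d r (p + r) (q - r + 1) p q (by ring) (by ring))
          (g' := B.d r p q (p - r) (q + r - 1) rfl rfl)
          (f r p q)
          (by
            intro z hz
            have := LinearMap.congr_fun
              (comm r p q (p - r) (q + r - 1) rfl rfl) z
            simpa [hz] using this)
          (by
            rintro z ⟨y, hy⟩
            refine ⟨f r (p + r) (q - r + 1) y, ?_⟩
            have := LinearMap.congr_fun
              (comm r (p + r) (q - r + 1) p q (by ring) (by ring)) y
            rw [← hy]
            simpa using this)
          (A.page r p q x)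
  finf : ∀ (p q : ℤ), A.Einf p q →ₗ[R] B.Einf p q
  finfCompat : ∀ (r : ℕ) (p q : ℤ) (h : p + q + 1 < (r : ℤ)) (x : A.E r p q),
    finf p q (A.stab r p q h x) = B.stab r p q h (f r p q x)

/-!
If `f^r` is injective at `(p,q)` and surjective at the source
`(p+r, q-r+1)` of the incoming differential, then `f^{r+1}` is injective at `(p,q)`; dually,
surjectivity at `(p,q)` and injectivity at the target `(p-r, q+r-1)` of the outgoing
differential give surjectivity of `f^{r+1}`. Starting from page 2 this propagates, by
induction on `r`, injectivity on the region `q ≤ N, p + q ≤ N` and surjectivity on the region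
`q ≤ N, p + q ≤ N + 1` to every later page; differentials leaving the first quadrant
hit zero modules, where `f^r` is trivially bijective. Since `E^∞_{pq} = E^r_{pq}` once
`r > p + q + 1`, the limit map is bijective on the line `p + q = N`.
-/

section Homology

variable {R : Type} [CommRing R] {A B C A' B' C' : Type}
  [AddCommGroup A] [AddCommGroup B] [AddCommGroup C]
  [AddCommGroup A'] [AddCommGroup B'] [AddCommGroup C']
  [Module R A] [Module R B] [Module R C]
  [Module R A'] [Module R B'] [Module R C']
  {f : A →ₗ[R] B} {g : B →ₗ[R] C} {f' : A' →ₗ[R] B'} {g' : B' →ₗ[R] C'}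

lemma HmlMap_injective (φA : A →ₗ[R] A') (φB : B →ₗ[R] B')
    {hker : ∀ x : B, g x = 0 → g' (φB x) = 0}
    {hrange : ∀ x : B, (∃ y, f y = x) → ∃ y', f' y' = φB x}
    (hcomm : ∀ y, f' (φA y) = φB (f y))
    (hA : Function.Surjective φA) (hB : Function.Injective φB) :
    Function.Injective (HmlMap R φB hker hrange) := by
  intro a b hab
  obtain ⟨⟨x, hx⟩, rfl⟩ := Submodule.Quotient.mk_surjective _ a
  obtain ⟨⟨y, hy⟩, rfl⟩ := Submodule.Quotient.mk_surjective _ b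
  rw [HmlMap, Submodule.mapQ_apply, Submodule.mapQ_apply, Submodule.Quotient.eq,
    Submodule.mem_comap] at hab
  obtain ⟨w', hw'⟩ := hab
  obtain ⟨w, rfl⟩ := hA w'
  refine (Submodule.Quotient.eq _).mpr ⟨w, hB ?_⟩
  rw [← hcomm w, hw']
  simp

lemma HmlMap_surjective (φB : B →ₗ[R] B') (φC : C →ₗ[R] C')
    {hker : ∀ x : B, g x = 0 → g' (φB x) = 0}
    {hrange : ∀ x : B, (∃ y, f y = x) → ∃ y', f' y' = φB x}
    (hcomm : ∀ x, g' (φB x) = φC (g x))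
    (hB : Function.Surjective φB) (hC : Function.Injective φC) :
    Function.Surjective (HmlMap R φB hker hrange) := by
  intro a
  obtain ⟨⟨x', hx'⟩, rfl⟩ := Submodule.Quotient.mk_surjective _ a
  obtain ⟨x, rfl⟩ := hB x'
  have hgx : g x = 0 := hC <| by rw [← hcomm x, map_zero]; exact hx'
  exact ⟨Submodule.Quotient.mk ⟨x, hgx⟩, rfl⟩

end Homology

namespace SpecSeqHom

variable {R : Type} [CommRing R] {A B : SpecSeq R} (F : SpecSeqHom R A B)

lemma bijective_of_neg (r : ℕ) {p q : ℤ} (h : p < 0 ∨ q < 0) :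
    Function.Bijective (F.f r p q) :=
  have := A.firstQuad r p q h
  have := B.firstQuad r p q h
  ⟨fun _ _ _ => Subsingleton.elim _ _, fun _ => ⟨0, Subsingleton.elim _ _⟩⟩

lemma injective_succ (r : ℕ) (p q : ℤ)
    (hsrc : Function.Surjective (F.f r (p + r) (q - r + 1)))
    (hinj : Function.Injective (F.f r p q)) :
    Function.Injective (F.f (r + 1) p q) := by
  intro a b hab
  have h := congrArg (B.page r p q) hab
  rw [F.compat, F.compat] at h
  exact (A.page r p q).injective <|
    HmlMap_injective (F.f r (p + r) (q - r + 1)) (F.f r p q)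
      (fun y => LinearMap.congr_fun (F.comm r _ _ p q _ _) y) hsrc hinj h

lemma surjective_succ (r : ℕ) (p q : ℤ)
    (hsurj : Function.Surjective (F.f r p q))
    (htgt : Function.Injective (F.f r (p - r) (q + r - 1))) :
    Function.Surjective (F.f (r + 1) p q) := by
  intro b
  obtain ⟨a, ha⟩ := HmlMap_surjective (f := A.d r (p + r) (q - r + 1) p q (by ring) (by ring))
    (f' := B.d r (p + r) (q - r + 1) p q (by ring) (by ring)) (F.f r p q)
    (F.f r (p - r) (q + r - 1)) (fun x => LinearMap.congr_fun (F.comm r p q _ _ rfl rfl) x)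
    hsurj htgt (B.page r p q b)
  refine ⟨(A.page r p q).symm a, (B.page r p q).injective ?_⟩
  rw [F.compat, LinearEquiv.apply_symm_apply, ha]

lemma injective_and_surjective_of_bijective_two {N : ℤ}
    (h2 : ∀ p q : ℤ, q ≤ N → Function.Bijective (F.f 2 p q)) (r : ℕ) (hr : 2 ≤ r)
    (p q : ℤ) (hq : q ≤ N) :
    (p + q ≤ N → Function.Injective (F.f r p q)) ∧
      (p + q ≤ N + 1 → Function.Surjective (F.f r p q)) := by
  induction r, hr using Nat.le_induction generalizing p q with
  | base => exact ⟨fun _ => (h2 p q hq).1, fun _ => (h2 p q hq).2⟩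
  | succ r hr ih =>
    refine ⟨fun hpq => F.injective_succ r p q ?_ ((ih p q hq).1 hpq),
      fun hpq => F.surjective_succ r p q ((ih p q hq).2 hpq) ?_⟩
    · rcases lt_or_ge (q - r + 1) 0 with hneg | hnonneg
      · exact (F.bijective_of_neg r (Or.inr hneg)).2
      · exact (ih _ _ (by omega)).2 (by omega)
    · rcases lt_or_ge (p - r) 0 with hneg | hnonneg
      · exact (F.bijective_of_neg r (Or.inl hneg)).1
      · exact (ih _ _ (by omega)).1 (by omega)

lemma finf_bijective {r : ℕ} {p q : ℤ} (hr : p + q + 1 < r)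
    (hf : Function.Bijective (F.f r p q)) : Function.Bijective (F.finf p q) := by
  have hcomp : F.finf p q ∘ A.stab r p q hr = B.stab r p q hr ∘ F.f r p q :=
    funext (F.finfCompat r p q hr)
  rw [← Function.Bijective.of_comp_iff _ (A.stab r p q hr).bijective, hcomp]
  exact (B.stab r p q hr).bijective.comp hf

end SpecSeqHom

/-- If a morphism of first-quadrant spectral sequences is an isomorphism on the second
page in all bidegrees `(p,q)` with `q ≤ N`, then it is an isomorphism on the limit terms
`E∞_{pq}` for all `(p,q)` with `p + q = N`. -/
theorem spectral_sequence_partial_iso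
    (R : Type) [CommRing R] (A B : SpecSeq R) (F : SpecSeqHom R A B) (N : ℤ)
    (h2 : ∀ p q : ℤ, q ≤ N → Function.Bijective (F.f 2 p q)) :
    ∀ p q : ℤ, p + q = N → Function.Bijective (F.finf p q) := by
  intro p q hpq
  have hr : p + q + 1 < ((N.toNat + 2 : ℕ) : ℤ) := by omega
  refine F.finf_bijective hr ?_
  rcases lt_or_ge p 0 with hp | hp
  · exact F.bijective_of_neg _ (Or.inl hp)
  · obtain ⟨hinj, hsurj⟩ :=
      F.injective_and_surjective_of_bijective_two h2 (N.toNat + 2) (by omega) p q (by omega)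
    exact ⟨hinj hpq.le, hsurj (by omega)⟩
end
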